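/- Let n > 2 be an integer. The state complexity of the square root operation at n equals n^n − n(n−1)/2; that is: (i) for every regular language L over any finite alphabet with sc(L) = n, sc(√L) ≤ n^n − n(n−1)/2, and (ii) there exist a finite alphabet Σ and a regular language L over Σ with sc(L) = n and sc(√L) = n^n − n(n−1)/2. -/

import Mathlib

/-!
By Myhill–Nerode, the state complexity of a regular language is its number of left
quotients. If `M` is a DFA for `L` with start `q₀` and accepting set `F`, the left quotient
of `√L` by a word `w` depends only on the transformation `f` that `w` induces on the states:
it is the set of `u` with `h (f (h (f q₀))) ∈ F`, where `h` is the transformation of `u`.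
Two transformations pass the same tests `h` exactly when they are equal or are the pair
"`F ↦ a`, `Fᶜ ↦ b`" and "`F ↦ b`, `Fᶜ ↦ a`"; identifying these `n(n-1)/2` pairs leaves at
most `n^n - n(n-1)/2` quotients. Over the alphabet of all transformations of `Fin n` every
test is a single letter, so the bound is attained there, by a language of state
complexity `n`.
-/


/-- `L` is recognized by some complete DFA with exactly `n` states. -/
def recognizedBy {α : Type} (L : Language α) (n : ℕ) : Prop :=
  ∃ M : DFA α (Fin n), M.accepts = L

/-- The state complexity of a language: the minimal number of states of a
complete DFA recognizing it. -/
noncomputable def sc {α : Type} (L : Language α) : ℕ :=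
  sInf {n | recognizedBy L n}

/-- The square root of a language: `√L = {w | w·w ∈ L}`. -/
def sqrtLang {α : Type} (L : Language α) : Language α :=
  {w | w ++ w ∈ L}

open Set Function

section StateComplexity

variable {α : Type} {L : Language α}

theorem isRegular_iff_exists_recognizedBy : L.IsRegular ↔ ∃ m, recognizedBy L m := by
  constructor
  · rintro ⟨σ, _, M, rfl⟩
    exact ⟨_, M.reindex (Fintype.equivFin σ), DFA.accepts_reindex _ _⟩
  · rintro ⟨m, M, rfl⟩
    exact ⟨Fin m, inferInstance, M, rfl⟩

theorem sc_le_card {σ : Type} [Fintype σ] (M : DFA α σ) : sc M.accepts ≤ Fintype.card σ :=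
  Nat.sInf_le ⟨M.reindex (Fintype.equivFin σ), DFA.accepts_reindex _ _⟩

theorem natCard_range_leftQuotient_accepts_le {σ : Type*} [Finite σ] (M : DFA α σ) :
    Nat.card (range M.accepts.leftQuotient) ≤ Nat.card σ := by
  rw [Language.leftQuotient_accepts]
  exact (Nat.card_mono (finite_range _) (range_comp_subset_range _ _)).trans
    (Finite.card_range_le M.acceptsFrom)

theorem sc_eq_natCard_range_leftQuotient (hL : L.IsRegular) :
    sc L = Nat.card (range L.leftQuotient) := by
  have hfin := hL.finite_range_leftQuotient
  refine le_antisymm ?_ ?_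
  · have := hfin.fintype
    simpa [Nat.card_eq_fintype_card] using sc_le_card L.toDFA
  · obtain ⟨M, hM⟩ : recognizedBy L (sc L) :=
      Nat.sInf_mem (isRegular_iff_exists_recognizedBy.1 hL)
    simpa [← hM] using natCard_range_leftQuotient_accepts_le M

theorem isRegular_of_range_leftQuotient_subset {ι : Type*} [Finite ι] {Φ : ι → Language α}
    (h : range L.leftQuotient ⊆ range Φ) : L.IsRegular :=
  .of_finite_range_leftQuotient ((finite_range Φ).subset h)

theorem sc_le_of_range_leftQuotient_subset {ι : Type*} [Finite ι] {Φ : ι → Language α}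
    (h : range L.leftQuotient ⊆ range Φ) : sc L ≤ Nat.card ι := by
  rw [sc_eq_natCard_range_leftQuotient (isRegular_of_range_leftQuotient_subset h)]
  exact (Nat.card_mono (finite_range Φ) h).trans (Finite.card_range_le Φ)

theorem natCard_le_sc_of_injective (hL : L.IsRegular) {ι : Type*} {w : ι → List α}
    (hw : Injective (L.leftQuotient ∘ w)) : Nat.card ι ≤ sc L := by
  rw [sc_eq_natCard_range_leftQuotient hL]
  have := hL.finite_range_leftQuotient.to_subtype
  exact Nat.card_le_card_of_injective (fun i => ⟨_, mem_range_self (w i)⟩)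
    fun i j hij => hw (congrArg Subtype.val hij)

theorem DFA.accept_nonempty_of_one_lt_sc {σ : Type*} (M : DFA α σ)
    (h : 1 < sc M.accepts) : M.accept.Nonempty ∧ M.acceptᶜ.Nonempty := by
  by_contra hM
  have hmem q : q ∈ M.accept ↔ M.accept.Nonempty :=
    ⟨fun hq => ⟨q, hq⟩, fun hne => by_contra fun hq => hM ⟨hne, q, hq⟩⟩
  let M₁ : DFA α Unit := ⟨fun _ _ => (), (), {_u | M.accept.Nonempty}⟩
  have hM₁ : M.accepts = M₁.accepts := Set.ext fun w => hmem (M.eval w)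
  have := sc_le_card M₁
  rw [← hM₁, Fintype.card_unit] at this
  omega

end StateComplexity

section SquareEquiv

variable {Q : Type*} {F : Set Q} {q₀ : Q} {f g : Q → Q}

open Classical in
noncomputable def twoValued (F : Set Q) (a b : Q) : Q → Q := fun x => if x ∈ F then a else b

def SquareEquiv (F : Set Q) (q₀ : Q) (f g : Q → Q) : Prop :=
  ∀ h : Q → Q, h (f (h (f q₀))) ∈ F ↔ h (g (h (g q₀))) ∈ F

theorem SquareEquiv.symm (H : SquareEquiv F q₀ f g) : SquareEquiv F q₀ g f :=
  fun h => (H h).symm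

theorem squareEquiv_twoValued_swap (F : Set Q) (q₀ a b : Q) :
    SquareEquiv F q₀ (twoValued F a b) (twoValued F b a) := by
  classical
  intro h
  by_cases hq : q₀ ∈ F <;> by_cases ha : h a ∈ F <;> by_cases hb : h b ∈ F <;>
    simp [twoValued, hq, ha, hb]

theorem twoValued_inj (hF : F.Nonempty) (hFc : Fᶜ.Nonempty) {a b a' b' : Q} :
    twoValued F a b = twoValued F a' b' ↔ a = a' ∧ b = b' := by
  obtain ⟨x₁, hx₁⟩ := hF
  obtain ⟨x₂, hx₂⟩ := hFc
  refine ⟨fun h => ⟨?_, ?_⟩, fun h => h.1 ▸ h.2 ▸ rfl⟩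
  · simpa [twoValued, hx₁] using congrFun h x₁
  · simpa [twoValued, show x₂ ∉ F from hx₂] using congrFun h x₂

theorem exists_mem_iff_notMem (hF : F.Nonempty) (hFc : Fᶜ.Nonempty) (x : Q) :
    ∃ z, z ∈ F ↔ x ∉ F := by
  by_cases hx : x ∈ F
  · obtain ⟨z, hz⟩ := hFc
    exact ⟨z, iff_of_false hz (not_not.2 hx)⟩
  · obtain ⟨z, hz⟩ := hF
    exact ⟨z, iff_of_true hz hx⟩

variable [DecidableEq Q]

theorem SquareEquiv.eq_of_apply_eq (hF : F.Nonempty) (hFc : Fᶜ.Nonempty)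
    (H : SquareEquiv F q₀ f g) (h₀ : f q₀ = g q₀) : f = g := by
  funext x
  by_contra hne
  obtain ⟨z, hz⟩ := exists_mem_iff_notMem hF hFc x
  -- a test `h` with `h (f q₀) = x` that sends `f x` and `g x` to opposite sides of `F`
  obtain ⟨c, hc₀, hc⟩ :
      ∃ c, c ≠ f q₀ ∧ (f x = c ∧ g x ≠ c ∨ g x = c ∧ f x ≠ c) := by
    by_cases hfx : f x = f q₀
    · exact ⟨g x, fun e => hne (hfx.trans e.symm), .inr ⟨rfl, hne⟩⟩
    · exact ⟨f x, hfx, .inl ⟨rfl, Ne.symm hne⟩⟩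
  have := H fun t => if t = c then z else x
  rcases hc with ⟨hf, hg⟩ | ⟨hg, hf⟩ <;>
    simp [← h₀, hc₀.symm, hf, hg] at this <;> tauto

theorem SquareEquiv.apply_eq_or_apply_eq (hF : F.Nonempty) (hFc : Fᶜ.Nonempty)
    (H : SquareEquiv F q₀ f g) (h₀ : f q₀ ≠ g q₀) (x : Q) :
    f x = f q₀ ∨ f x = g q₀ := by
  by_contra! hx
  obtain ⟨z, hz⟩ := exists_mem_iff_notMem hF hFc q₀
  have := H fun t => if t = f q₀ then x else if t = g q₀ then q₀ else z
  simp [hx.1, hx.2, h₀.symm] at this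
  tauto

theorem SquareEquiv.apply_eq_iff (H : SquareEquiv F q₀ f g) (h₀ : f q₀ ≠ g q₀)
    (hf : ∀ x, f x = f q₀ ∨ f x = g q₀) (hg : ∀ y, g y = f q₀ ∨ g y = g q₀)
    {x y : Q} (hxy : x ∈ F ↔ y ∉ F) : f x = f q₀ ↔ g y = f q₀ := by
  have := H fun t => if t = f q₀ then x else y
  rcases hf x with hfx | hfx <;> rcases hg y with hgy | hgy <;>
    simp [hfx, hgy, h₀.symm] at this ⊢ <;> tauto

theorem SquareEquiv.exists_eq_twoValued (hF : F.Nonempty) (hFc : Fᶜ.Nonempty)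
    (H : SquareEquiv F q₀ f g) (h₀ : f q₀ ≠ g q₀) :
    ∃ a b, a ≠ b ∧ f = twoValued F a b ∧ g = twoValued F b a := by
  have hf := H.apply_eq_or_apply_eq hF hFc h₀
  have hg y : g y = f q₀ ∨ g y = g q₀ := (H.symm.apply_eq_or_apply_eq hF hFc h₀.symm y).symm
  have hfg_iff {x y} (hxy : x ∈ F ↔ y ∉ F) := H.apply_eq_iff h₀ hf hg hxy
  have eq_of_iff {a b : Q} (ha : a = f q₀ ∨ a = g q₀) (hb : b = f q₀ ∨ b = g q₀)
      (hab : a = f q₀ ↔ b = f q₀) : a = b := by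
    rcases ha with rfl | rfl <;> rcases hb with hb | hb <;> simp_all
  have hf_const {x x'} (hx : x ∈ F ↔ x' ∈ F) : f x = f x' := by
    obtain ⟨y, hy⟩ := exists_mem_iff_notMem hF hFc x
    exact eq_of_iff (hf x) (hf x') <| (hfg_iff (y := y) (by tauto)).trans (hfg_iff (by tauto)).symm
  have hg_const {y y'} (hy : y ∈ F ↔ y' ∈ F) : g y = g y' := by
    obtain ⟨x, hx⟩ := exists_mem_iff_notMem hF hFc y
    exact eq_of_iff (hg y) (hg y') <| (hfg_iff (x := x) (by tauto)).symm.trans (hfg_iff (by tauto))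
  obtain ⟨x₁, hx₁⟩ := hF
  obtain ⟨x₂, hx₂ : x₂ ∉ F⟩ := hFc
  have hg₁ : g x₁ = f x₂ := (eq_of_iff (hf x₂) (hg x₁) (hfg_iff (by tauto))).symm
  have hg₂ : g x₂ = f x₁ := (eq_of_iff (hf x₁) (hg x₂) (hfg_iff (by tauto))).symm
  have hf_apply x : f x = twoValued F (f x₁) (f x₂) x := by
    by_cases hx : x ∈ F <;> simp only [twoValued, hx, if_true, if_false] <;>
      exact hf_const (by tauto)
  have hg_apply x : g x = twoValued F (f x₂) (f x₁) x := by
    by_cases hx : x ∈ F <;> simp only [twoValued, hx, if_true, if_false]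
    · exact (hg_const (by tauto)).trans hg₁
    · exact (hg_const (by tauto)).trans hg₂
  refine ⟨f x₁, f x₂, fun h => h₀ ?_, funext hf_apply, funext hg_apply⟩
  rw [hf_apply, hg_apply, h]

theorem SquareEquiv.eq_or_exists_eq_twoValued (hF : F.Nonempty) (hFc : Fᶜ.Nonempty)
    (H : SquareEquiv F q₀ f g) :
    f = g ∨ ∃ a b, a ≠ b ∧ f = twoValued F a b ∧ g = twoValued F b a := by
  by_cases h₀ : f q₀ = g q₀
  · exact .inl (H.eq_of_apply_eq hF hFc h₀)
  · exact .inr (H.exists_eq_twoValued hF hFc h₀)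

end SquareEquiv

section Representatives

open Finset

variable {Q : Type*} [Fintype Q] [LinearOrder Q] {F : Set Q}

/-- Of each pair `twoValued F a b`, `twoValued F b a` (`a < b`) of `SquareEquiv` transformations,
the one discarded when counting classes. -/
noncomputable def swappedTwoValued (F : Set Q) : Finset (Q → Q) :=
  ({x : Q × Q | x.1 < x.2} : Finset (Q × Q)).image fun x => twoValued F x.2 x.1

theorem mem_swappedTwoValued {f : Q → Q} :
    f ∈ swappedTwoValued F ↔ ∃ a b, a < b ∧ twoValued F b a = f := by
  simp [swappedTwoValued]

theorem card_compl_swappedTwoValued (hF : F.Nonempty) (hFc : Fᶜ.Nonempty) :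
    #(swappedTwoValued F)ᶜ = Fintype.card Q ^ Fintype.card Q - (Fintype.card Q).choose 2 := by
  rw [card_compl, Fintype.card_fun, swappedTwoValued, Finset.card_image_of_injective,
    Fintype.card_product_filter_lt]
  intro x y h
  obtain ⟨h₂, h₁⟩ := (twoValued_inj hF hFc).1 h
  exact Prod.ext h₁ h₂

theorem exists_squareEquiv_notMem_swappedTwoValued (hF : F.Nonempty) (hFc : Fᶜ.Nonempty)
    (q₀ : Q) (f : Q → Q) : ∃ g ∉ swappedTwoValued F, SquareEquiv F q₀ f g := by
  by_cases hf : f ∈ swappedTwoValued F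
  · obtain ⟨a, b, hab, rfl⟩ := mem_swappedTwoValued.1 hf
    refine ⟨twoValued F a b, fun h => ?_, squareEquiv_twoValued_swap F q₀ b a⟩
    obtain ⟨a', b', hab', he⟩ := mem_swappedTwoValued.1 h
    obtain ⟨rfl, rfl⟩ := (twoValued_inj hF hFc).1 he
    exact lt_asymm hab hab'
  · exact ⟨f, hf, fun _ => Iff.rfl⟩

theorem SquareEquiv.eq_of_notMem_swappedTwoValued (hF : F.Nonempty) (hFc : Fᶜ.Nonempty)
    {q₀ : Q} {f g : Q → Q} (H : SquareEquiv F q₀ f g) (hf : f ∉ swappedTwoValued F)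
    (hg : g ∉ swappedTwoValued F) : f = g := by
  refine (H.eq_or_exists_eq_twoValued hF hFc).resolve_right ?_
  rintro ⟨a, b, hab, rfl, rfl⟩
  rcases hab.lt_or_gt with hab | hab
  · exact hg (mem_swappedTwoValued.2 ⟨a, b, hab, rfl⟩)
  · exact hf (mem_swappedTwoValued.2 ⟨b, a, hab, rfl⟩)

end Representatives

section SquareRoot

open Finset

namespace DFA

variable {α : Type} {σ : Type*} (M : DFA α σ)

def squareSuffixes (f : σ → σ) : Language α :=
  {u | M.evalFrom (f (M.evalFrom (f M.start) u)) u ∈ M.accept}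

theorem leftQuotient_sqrtLang_accepts (w : List α) :
    (sqrtLang M.accepts).leftQuotient w = M.squareSuffixes (M.evalFrom · w) := by
  ext u
  change M.evalFrom M.start (w ++ u ++ (w ++ u)) ∈ M.accept ↔ _
  simp only [evalFrom_of_append]
  rfl

theorem squareSuffixes_eq_of_squareEquiv {f g : σ → σ} (H : SquareEquiv M.accept M.start f g) :
    M.squareSuffixes f = M.squareSuffixes g :=
  Set.ext fun u => H (M.evalFrom · u)

variable [Fintype σ] [LinearOrder σ]

theorem range_leftQuotient_sqrtLang_accepts_subset (hF : M.accept.Nonempty)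
    (hFc : M.acceptᶜ.Nonempty) :
    Set.range (sqrtLang M.accepts).leftQuotient ⊆
      Set.range fun f : ((swappedTwoValued M.accept)ᶜ : Finset (σ → σ)) =>
        M.squareSuffixes f := by
  rintro _ ⟨w, rfl⟩
  obtain ⟨g, hg, H⟩ :=
    exists_squareEquiv_notMem_swappedTwoValued hF hFc M.start (M.evalFrom · w)
  refine ⟨⟨g, mem_compl.2 hg⟩, ?_⟩
  rw [leftQuotient_sqrtLang_accepts, squareSuffixes_eq_of_squareEquiv _ H]

theorem sc_sqrtLang_accepts_le (hF : M.accept.Nonempty) (hFc : M.acceptᶜ.Nonempty) :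
    sc (sqrtLang M.accepts) ≤ Fintype.card σ ^ Fintype.card σ - (Fintype.card σ).choose 2 := by
  rw [← card_compl_swappedTwoValued hF hFc, ← Nat.card_eq_finsetCard]
  exact sc_le_of_range_leftQuotient_subset (M.range_leftQuotient_sqrtLang_accepts_subset hF hFc)

end DFA

variable {Q : Type} {F : Set Q}

def transformationDFA (q₀ : Q) (F : Set Q) : DFA (Q → Q) Q :=
  ⟨fun q f => f q, q₀, F⟩

variable [Fintype Q]

theorem sc_transformationDFA (hF : F.Nonempty) (hFc : Fᶜ.Nonempty) (q₀ : Q) :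
    sc (transformationDFA q₀ F).accepts = Fintype.card Q := by
  classical
  refine le_antisymm (sc_le_card _) ?_
  rw [← Nat.card_eq_fintype_card]
  refine natCard_le_sc_of_injective ⟨Q, inferInstance, _, rfl⟩ (w := fun q => [fun _ => q]) ?_
  intro i j hij
  by_contra hne
  obtain ⟨z, hz⟩ := exists_mem_iff_notMem hF hFc i
  let h : Q → Q := fun t => if t = i then z else i
  have : h i ∈ F ↔ h j ∈ F := Set.ext_iff.1 hij [h]
  simp [h, Ne.symm hne] at this
  tauto

theorem sc_sqrtLang_transformationDFA [LinearOrder Q] (hF : F.Nonempty) (hFc : Fᶜ.Nonempty)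
    (q₀ : Q) : sc (sqrtLang (transformationDFA q₀ F).accepts) =
      Fintype.card Q ^ Fintype.card Q - (Fintype.card Q).choose 2 := by
  set M := transformationDFA q₀ F
  refine le_antisymm (M.sc_sqrtLang_accepts_le hF hFc) ?_
  rw [← card_compl_swappedTwoValued hF hFc, ← Nat.card_eq_finsetCard]
  refine natCard_le_sc_of_injective
    (isRegular_of_range_leftQuotient_subset (M.range_leftQuotient_sqrtLang_accepts_subset hF hFc))
    (w := fun f : ((swappedTwoValued F)ᶜ : Finset (Q → Q)) => [f.1]) ?_
  rintro ⟨f, hf⟩ ⟨g, hg⟩ hfg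
  have H : SquareEquiv F q₀ f g := fun h => Set.ext_iff.1 hfg [h]
  exact Subtype.ext (H.eq_of_notMem_swappedTwoValued hF hFc (mem_compl.1 hf) (mem_compl.1 hg))

end SquareRoot

/-- for `n > 2`, the state complexity of the square root operation at `n`
equals `n^n - n(n-1)/2`: (i) every regular language `L` with `sc L = n` satisfies
`sc (√L) ≤ n^n - n(n-1)/2`, and (ii) some regular language attains the bound. -/
theorem stmt8 (n : ℕ) (hn : 2 < n) :
    (∀ (Γ : Type) (_ : Fintype Γ) (L : Language Γ),
      (∃ m, recognizedBy L m) → sc L = n →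
      sc (sqrtLang L) ≤ n ^ n - n * (n - 1) / 2) ∧
    (∃ (Γ : Type) (_ : Fintype Γ) (L : Language Γ),
      (∃ m, recognizedBy L m) ∧ sc L = n ∧
      sc (sqrtLang L) = n ^ n - n * (n - 1) / 2) := by
  refine ⟨fun Γ _ L hL hscL => ?_, ?_⟩
  · obtain ⟨M, rfl⟩ : recognizedBy L n := hscL ▸ Nat.sInf_mem hL
    obtain ⟨hF, hFc⟩ := M.accept_nonempty_of_one_lt_sc (by omega)
    simpa [Nat.choose_two_right] using M.sc_sqrtLang_accepts_le hF hFc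
  · let q₀ : Fin n := ⟨0, by omega⟩
    have hF : ({q₀} : Set (Fin n)).Nonempty := Set.singleton_nonempty q₀
    have hFc : ({q₀} : Set (Fin n))ᶜ.Nonempty := ⟨⟨1, by omega⟩, by simp [q₀]⟩
    refine ⟨_, inferInstance, (transformationDFA q₀ {q₀}).accepts, ⟨n, _, rfl⟩, ?_, ?_⟩
    · simpa using sc_transformationDFA hF hFc q₀
    · simpa [Nat.choose_two_right] using sc_sqrtLang_transformationDFA hF hFc q₀
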